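/- Consider nonadaptive group testing under a model where only defects matter, with a fixed testing matrix X ∈ {0,1}^{N×T}, the genie construction of 𝓛 and 𝒦, an estimator K̂ = K̂(Y_1,…,Y_T), and error probability ε = P(K̂ ≠ 𝒦). Then (1 − ε) · log₂ C(N−ℓ, K−ℓ) ≤ 1 + Σ_{t=1}^{T} I( X_{𝒦∖𝓛,t} : Y_t ∣ X_{𝓛,t} ), where C(n,k) denotes the binomial coefficient. -/

import Mathlib

open Finset Real
open scoped Classical

noncomputable section

/-- The probability of an event `E` under a pmf `μ` on a finite sample space. -/
def prb {Ω : Type*} [Fintype Ω] (μ : Ω → ℝ) (E : Ω → Prop) : ℝ :=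
  ∑ ω, if E ω then μ ω else 0

/-- `μ` is a probability mass function. -/
def IsPmf {Ω : Type*} [Fintype Ω] (μ : Ω → ℝ) : Prop :=
  (∀ ω, 0 ≤ μ ω) ∧ ∑ ω, μ ω = 1

/-- The conditional pmf of `μ` given the event `E`. -/
def condPmf {Ω : Type*} [Fintype Ω] (μ : Ω → ℝ) (E : Ω → Prop) : Ω → ℝ :=
  fun ω => (if E ω then μ ω else 0) / prb μ E

/-- Shannon entropy (base-2 logarithms) of a probability mass function on a finite set. -/
def entPmf {α : Type*} [Fintype α] (p : α → ℝ) : ℝ :=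
  - ∑ a : α, p a * Real.logb 2 (p a)

/-- Shannon entropy (base-2) of the random variable `X` under the pmf `μ`. -/
def ent {Ω α : Type*} [Fintype Ω] [Fintype α] (μ : Ω → ℝ) (X : Ω → α) : ℝ :=
  - ∑ a : α, prb μ (fun ω => X ω = a) * Real.logb 2 (prb μ (fun ω => X ω = a))

/-- Conditional Shannon entropy `H(X ∣ Z) = Σ_z P(Z = z) · H(X ∣ Z = z)`. -/
def condEnt {Ω α γ : Type*} [Fintype Ω] [Fintype α] (μ : Ω → ℝ) (X : Ω → α) (Z : Ω → γ) : ℝ :=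
  ∑ z ∈ Finset.univ.image Z,
    prb μ (fun ω => Z ω = z) * ent (condPmf μ (fun ω => Z ω = z)) X

/-- Mutual information `I(X : Y) = H(X) + H(Y) − H(X,Y)` (base-2). -/
def mutInfo {Ω α β : Type*} [Fintype Ω] [Fintype α] [Fintype β]
    (μ : Ω → ℝ) (X : Ω → α) (Y : Ω → β) : ℝ :=
  ent μ X + ent μ Y - ent μ (fun ω => (X ω, Y ω))

/-- Conditional mutual information `I(X : Y ∣ Z) = Σ_z P(Z = z) · I(X : Y ∣ Z = z)`. -/
def condMutInfo {Ω α β γ : Type*} [Fintype Ω] [Fintype α] [Fintype β]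
    (μ : Ω → ℝ) (X : Ω → α) (Y : Ω → β) (Z : Ω → γ) : ℝ :=
  ∑ z ∈ Finset.univ.image Z,
    prb μ (fun ω => Z ω = z) * mutInfo (condPmf μ (fun ω => Z ω = z)) X Y

/-- The `K`-element subsets of `{1, …, N}`. -/
abbrev KSets (N K : ℕ) := {S : Finset (Fin N) // S.card = K}

/-- The outcomes of the tests before test `t`. -/
def prevOut {T : ℕ} {Y : Type*} (y : Fin T → Y) (t : Fin T) : Fin t.val → Y :=
  fun s => y ⟨s.val, s.isLt.trans t.isLt⟩

/-- `numDef x S y t` is `k_t`: the number of defective items (members of `S`) in the pool of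
test `t`, when the adaptive strategy `x` is used and the test outcomes are `y`. -/
def numDef {N T : ℕ} {Y : Type*} (x : (t : Fin T) → (Fin t.val → Y) → Fin N → Bool)
    (S : Finset (Fin N)) (y : Fin T → Y) (t : Fin T) : ℕ :=
  (S.filter (fun i => x t (prevOut y t) i = true)).card

/-- The joint pmf of the defective set `𝒦` (uniform over `K`-subsets of `{1,…,N}`) and the
test outcomes `Y_1, …, Y_T` of the adaptive strategy `x`, in the model where only defects
matter: conditionally on `𝒦` and the previous outcomes, `Y_t` has distribution `ν (k_t)`. -/
def gtPmf (N K T : ℕ) (Y : Type*) [Fintype Y] (ν : ℕ → Y → ℝ)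
    (x : (t : Fin T) → (Fin t.val → Y) → Fin N → Bool) :
    KSets N K × (Fin T → Y) → ℝ :=
  fun ω => (1 / (N.choose K : ℝ)) * ∏ t : Fin T, ν (numDef x ω.1.val ω.2 t) (ω.2 t)

/-- The joint pmf of the genie construction: `𝓛` uniform over `ℓ`-subsets of `{1,…,N}`;
conditionally on `𝓛`, the defective set `𝒦` uniform over the `K`-subsets containing `𝓛`;
and the test outcomes of the adaptive strategy `x`, in the model where only defects matter. -/
def geniePmf (N K L T : ℕ) (Y : Type*) [Fintype Y] (ν : ℕ → Y → ℝ)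
    (x : (t : Fin T) → (Fin t.val → Y) → Fin N → Bool) :
    KSets N L × KSets N K × (Fin T → Y) → ℝ :=
  fun ω =>
    (if ω.1.val ⊆ ω.2.1.val then
      (1 / (N.choose L : ℝ)) * (1 / ((N - L).choose (K - L) : ℝ))
    else 0) * ∏ t : Fin T, ν (numDef x ω.2.1.val ω.2.2 t) (ω.2.2 t)

/-- `XS S v` records the pair `(S, (v_i)_{i ∈ S})`: the set `S` together with the
restriction of `v` to `S`. -/
def XS {N : ℕ} (S : Finset (Fin N)) (v : Fin N → Bool) :
    Finset (Fin N) × (Fin N → Option Bool) :=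
  (S, fun i => if i ∈ S then some (v i) else none)

end

/-- The joint pmf of the genie construction (`𝓛` uniform over `ℓ`-subsets of `{1,…,N}` and,
conditionally on `𝓛`, `𝒦` uniform over the `K`-subsets containing `𝓛`) together with the test
outcomes for *nonadaptive* group testing with fixed testing matrix `X ∈ {0,1}^{N×T}`, in the
model where only defects matter: given `𝒦`, the outcomes are independent with `Y_t ∼ ν (k_t)`
where `k_t = |{i ∈ 𝒦 : X_{i,t} = 1}|`. -/
noncomputable def naGeniePmf (N K L T : ℕ) (Y : Type*) [Fintype Y] (ν : ℕ → Y → ℝ)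
    (X : Fin N → Fin T → Bool) :
    KSets N L × KSets N K × (Fin T → Y) → ℝ :=
  fun ω =>
    (if ω.1.val ⊆ ω.2.1.val then
      (1 / (N.choose L : ℝ)) * (1 / ((N - L).choose (K - L) : ℝ))
    else 0) * ∏ t : Fin T, ν ((ω.2.1.val.filter (fun i => X i t = true)).card) (ω.2.2 t)

/-!
Fano's argument, run conditionally on the genie's set `𝓛`. Given `𝓛 = u`, the defective set `𝒦`
is uniform on the `C(N-ℓ, K-ℓ)` supersets of `u`, so `H(𝒦 ∣ 𝓛) = log₂ C(N-ℓ, K-ℓ)`, while Fano's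
inequality for the guess `K̂(Y)` gives `H(𝒦 ∣ 𝓛, Y) ≤ 1 + ε log₂ C(N-ℓ, K-ℓ)`. The difference of
the two is `I(𝒦 : Y ∣ 𝓛)`. Given `𝓛 = u`, the tests form a memoryless channel in which `Y_t` sees
`𝒦` only through `X_{𝒦∖u,t}`, because `k_t = |(𝒦 ∖ u) ∩ pool_t| + |u ∩ pool_t|`; subadditivity
of `H(Y)` and additivity of `H(Y ∣ 𝒦)` then bound `I(𝒦 : Y ∣ 𝓛 = u)` by
`Σ_t I(X_{𝒦∖𝓛,t} : Y_t ∣ 𝓛 = u)`. Finally, conditioning on `X_{𝓛,t}` is conditioning on `𝓛`,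
which it records.
-/

section FiniteProbability

variable {Ω α γ : Type*} [Fintype Ω] {μ : Ω → ℝ}

noncomputable def law (μ : Ω → ℝ) (X : Ω → α) : α → ℝ :=
  fun a => prb μ (fun ω => X ω = a)

lemma prb_nonneg (hμ : ∀ ω, 0 ≤ μ ω) (E : Ω → Prop) : 0 ≤ prb μ E :=
  Finset.sum_nonneg fun ω _ => by split_ifs <;> simp [hμ ω]

lemma prb_mono (hμ : ∀ ω, 0 ≤ μ ω) {E F : Ω → Prop} (h : ∀ ω, E ω → F ω) :
    prb μ E ≤ prb μ F :=
  Finset.sum_le_sum fun ω _ => by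
    by_cases hE : E ω
    · simp [hE, h ω hE]
    · by_cases hF : F ω <;> simp [hE, hF, hμ ω]

lemma prb_congr_ae {E F : Ω → Prop} (h : ∀ ω, μ ω ≠ 0 → (E ω ↔ F ω)) :
    prb μ E = prb μ F :=
  Finset.sum_congr rfl fun ω _ => by
    by_cases hω : μ ω = 0
    · simp [hω]
    · exact if_congr (h ω hω) rfl rfl

lemma prb_congr {E F : Ω → Prop} (h : ∀ ω, E ω ↔ F ω) : prb μ E = prb μ F :=
  prb_congr_ae fun ω _ => h ω

lemma prb_eq_zero_of_forall {E : Ω → Prop} (h : ∀ ω, E ω → μ ω = 0) : prb μ E = 0 :=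
  Finset.sum_eq_zero fun ω _ => by split_ifs with hE <;> simp [h ω, hE]

lemma exists_of_prb_ne_zero {E : Ω → Prop} (h : prb μ E ≠ 0) : ∃ ω, E ω ∧ μ ω ≠ 0 := by
  by_contra! hc
  exact h (prb_eq_zero_of_forall hc)

lemma eq_zero_of_prb_eq_zero (hμ : ∀ ω, 0 ≤ μ ω) {E : Ω → Prop} (h : prb μ E = 0) {ω : Ω}
    (hω : E ω) : μ ω = 0 := by
  have := (Finset.sum_eq_zero_iff_of_nonneg fun x _ => ?_).1 h ω (Finset.mem_univ ω)
  · simpa [hω] using this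
  · split_ifs <;> simp [hμ x]

lemma prb_and_eq_zero (hμ : ∀ ω, 0 ≤ μ ω) {E : Ω → Prop} (h : prb μ E = 0) (F : Ω → Prop) :
    prb μ (fun ω => E ω ∧ F ω) = 0 :=
  prb_eq_zero_of_forall fun _ hω => eq_zero_of_prb_eq_zero hμ h hω.1

lemma prb_eq_self (μ : Ω → ℝ) (ω₀ : Ω) : prb μ (fun ω => ω = ω₀) = μ ω₀ := by
  simp [prb]

lemma prb_true (hμ : IsPmf μ) : prb μ (fun _ => True) = 1 := by
  simpa [prb] using hμ.2

lemma prb_not (hμ : IsPmf μ) (E : Ω → Prop) : prb μ (fun ω => ¬ E ω) = 1 - prb μ E := by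
  rw [eq_sub_iff_add_eq, ← hμ.2, prb, prb, ← Finset.sum_add_distrib]
  exact Finset.sum_congr rfl fun ω _ => by by_cases h : E ω <;> simp [h]

lemma sum_prb_and (Z : Ω → γ) (s : Finset γ) (hs : ∀ ω, Z ω ∈ s) (F : Ω → Prop) :
    ∑ z ∈ s, prb μ (fun ω => Z ω = z ∧ F ω) = prb μ F := by
  unfold prb
  rw [Finset.sum_comm]
  refine Finset.sum_congr rfl fun ω _ => ?_
  beta_reduce
  by_cases h : F ω <;> simp [h, hs ω]

lemma sum_prb_mul_eq_sum_mul_comp (X : Ω → α) (s : Finset α) (hs : ∀ ω, X ω ∈ s)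
    (g : α → ℝ) : ∑ a ∈ s, prb μ (fun ω => X ω = a) * g a = ∑ ω, μ ω * g (X ω) := by
  unfold prb
  simp_rw [Finset.sum_mul, ite_mul, zero_mul]
  rw [Finset.sum_comm]
  refine Finset.sum_congr rfl fun ω _ => ?_
  simp [Finset.sum_ite_eq, hs ω]

lemma isPmf_law [Fintype α] (hμ : IsPmf μ) (X : Ω → α) : IsPmf (law μ X) :=
  ⟨fun _ => prb_nonneg hμ.1 _, by
    simpa [law, prb_true hμ] using sum_prb_and (μ := μ) X Finset.univ (by simp) (fun _ => True)⟩

end FiniteProbability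

section Conditioning

variable {Ω : Type*} [Fintype Ω] {μ : Ω → ℝ}

lemma prb_pos (hμ : ∀ ω, 0 ≤ μ ω) {E : Ω → Prop} {ω : Ω} (hμω : μ ω ≠ 0) (hω : E ω) :
    0 < prb μ E :=
  calc 0 < μ ω := (hμ ω).lt_of_ne' hμω
    _ = prb μ (fun ω' => ω' = ω) := (prb_eq_self μ ω).symm
    _ ≤ prb μ E := prb_mono hμ fun _ h => h ▸ hω

lemma condPmf_nonneg (hμ : ∀ ω, 0 ≤ μ ω) (E : Ω → Prop) (ω : Ω) : 0 ≤ condPmf μ E ω :=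
  div_nonneg (by split_ifs <;> simp [hμ ω]) (prb_nonneg hμ E)

lemma prb_condPmf (μ : Ω → ℝ) (E F : Ω → Prop) :
    prb (condPmf μ E) F = prb μ (fun ω => E ω ∧ F ω) / prb μ E := by
  rw [prb, prb, Finset.sum_div]
  refine Finset.sum_congr rfl fun ω _ => ?_
  by_cases hF : F ω <;> by_cases hE : E ω <;> simp [condPmf, hF, hE]

lemma prb_mul_prb_condPmf (hμ : ∀ ω, 0 ≤ μ ω) (E F : Ω → Prop) :
    prb μ E * prb (condPmf μ E) F = prb μ (fun ω => E ω ∧ F ω) := by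
  rw [prb_condPmf]
  by_cases h : prb μ E = 0
  · simp [h, prb_and_eq_zero hμ h]
  · exact mul_div_cancel₀ _ h

lemma prb_mul_condPmf (hμ : ∀ ω, 0 ≤ μ ω) (E : Ω → Prop) (ω : Ω) :
    prb μ E * condPmf μ E ω = if E ω then μ ω else 0 := by
  by_cases h : prb μ E = 0
  · by_cases hE : E ω <;> simp [h, hE, eq_zero_of_prb_eq_zero hμ h]
  · simp [condPmf, mul_div_cancel₀ _ h]

lemma isPmf_condPmf (hμ : IsPmf μ) {E : Ω → Prop} (hE : prb μ E ≠ 0) : IsPmf (condPmf μ E) :=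
  ⟨condPmf_nonneg hμ.1 E, by
    simp only [condPmf]
    rw [← Finset.sum_div]
    exact div_self hE⟩

lemma condPmf_congr {E F : Ω → Prop} (h : ∀ ω, E ω ↔ F ω) : condPmf μ E = condPmf μ F := by
  funext ω
  simp only [condPmf]
  rw [if_congr (h ω) rfl rfl, prb_congr h]

lemma of_condPmf_ne_zero {E : Ω → Prop} {ω : Ω} (h : condPmf μ E ω ≠ 0) :
    E ω ∧ μ ω ≠ 0 := by
  by_cases hE : E ω
  · exact ⟨hE, fun h0 => h (by simp [condPmf, hE, h0])⟩
  · simp [condPmf, hE] at h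

end Conditioning

section Entropy

variable {Ω α β γ δ : Type*} [Fintype Ω] [Fintype α] [Fintype β] {μ : Ω → ℝ}

lemma ent_eq_neg_sum_logb (μ : Ω → ℝ) (X : Ω → α) :
    ent μ X = -∑ ω, μ ω * Real.logb 2 (prb μ (fun ω' => X ω' = X ω)) :=
  congrArg Neg.neg (sum_prb_mul_eq_sum_mul_comp X Finset.univ (fun _ => Finset.mem_univ _)
    fun a => Real.logb 2 (prb μ (fun ω' => X ω' = a)))

lemma condEnt_eq_neg_sum_logb (hμ : ∀ ω, 0 ≤ μ ω) (X : Ω → α) (Z : Ω → γ) :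
    condEnt μ X Z = -∑ ω, μ ω * Real.logb 2
      (prb μ (fun ω' => Z ω' = Z ω ∧ X ω' = X ω) / prb μ (fun ω' => Z ω' = Z ω)) := by
  have hZ : ∀ ω, Z ω ∈ Finset.univ.image Z := fun ω => Finset.mem_image_of_mem Z (mem_univ ω)
  have hpair := sum_prb_mul_eq_sum_mul_comp (μ := μ) (fun ω => (Z ω, X ω))
    (Finset.univ.image Z ×ˢ Finset.univ) (fun ω => Finset.mem_product.2 ⟨hZ ω, mem_univ _⟩)
    fun p => Real.logb 2 (prb μ (fun ω' => Z ω' = p.1 ∧ X ω' = p.2)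
      / prb μ (fun ω' => Z ω' = p.1))
  simp only [Finset.sum_product, Prod.mk.injEq] at hpair
  rw [← hpair, condEnt, ← Finset.sum_neg_distrib]
  refine Finset.sum_congr rfl fun z _ => ?_
  rw [ent, mul_neg, Finset.mul_sum]
  refine congrArg Neg.neg (Finset.sum_congr rfl fun a _ => ?_)
  rw [← mul_assoc, prb_mul_prb_condPmf hμ, prb_condPmf]

lemma ent_prod_eq_ent_add_condEnt (hμ : ∀ ω, 0 ≤ μ ω) (X : Ω → α) (Z : Ω → β) :
    ent μ (fun ω => (X ω, Z ω)) = ent μ Z + condEnt μ X Z := by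
  rw [ent_eq_neg_sum_logb, ent_eq_neg_sum_logb, condEnt_eq_neg_sum_logb hμ, ← neg_add,
    ← Finset.sum_add_distrib]
  refine congrArg Neg.neg (Finset.sum_congr rfl fun ω _ => ?_)
  by_cases hω : μ ω = 0
  · simp [hω]
  have hZ : prb μ (fun ω' => Z ω' = Z ω) ≠ 0 := ne_of_gt (prb_pos hμ hω rfl)
  have hXZ : prb μ (fun ω' => Z ω' = Z ω ∧ X ω' = X ω) ≠ 0 :=
    ne_of_gt (prb_pos hμ hω ⟨rfl, rfl⟩)
  rw [Real.logb_div hXZ hZ, prb_congr fun ω' => by rw [Prod.mk.injEq, and_comm]]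
  ring

lemma mutInfo_comm (μ : Ω → ℝ) (X : Ω → α) (Y : Ω → β) : mutInfo μ X Y = mutInfo μ Y X := by
  have hswap : ent μ (fun ω => (X ω, Y ω)) = ent μ (fun ω => (Y ω, X ω)) := by
    simp only [ent]
    congr 1
    refine Fintype.sum_equiv (Equiv.prodComm α β) _ _ fun p => ?_
    have : prb μ (fun ω => (X ω, Y ω) = p) = prb μ (fun ω => (Y ω, X ω) = p.swap) :=
      prb_congr fun ω => by simp [Prod.ext_iff, and_comm]
    rw [Equiv.prodComm_apply, this]
  rw [mutInfo, mutInfo, hswap, add_comm (ent μ X)]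

lemma mutInfo_eq_ent_sub_condEnt (hμ : ∀ ω, 0 ≤ μ ω) (X : Ω → α) (Y : Ω → β) :
    mutInfo μ X Y = ent μ X - condEnt μ X Y := by
  rw [mutInfo, ent_prod_eq_ent_add_condEnt hμ]
  ring

lemma condEnt_eq_sum_of_ent_condPmf (X : Ω → α) (Z : Ω → γ)
    (G : γ → ℝ) (hG : ∀ z, prb μ (fun ω => Z ω = z) ≠ 0 →
      ent (condPmf μ (fun ω => Z ω = z)) X = G z) :
    condEnt μ X Z = ∑ ω, μ ω * G (Z ω) := by
  rw [← sum_prb_mul_eq_sum_mul_comp Z _ fun ω => Finset.mem_image_of_mem Z (mem_univ ω)]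
  refine Finset.sum_congr rfl fun z _ => ?_
  by_cases hz : prb μ (fun ω => Z ω = z) = 0
  · simp [hz]
  · rw [hG z hz]

lemma condEnt_prod (hμ : ∀ ω, 0 ≤ μ ω) (X : Ω → α) (Z : Ω → γ) (W : Ω → δ) :
    condEnt μ X (fun ω => (Z ω, W ω)) = ∑ z ∈ Finset.univ.image Z,
      prb μ (fun ω => Z ω = z) * condEnt (condPmf μ (fun ω => Z ω = z)) X W := by
  simp_rw [condEnt_eq_neg_sum_logb (condPmf_nonneg hμ _), mul_neg, Finset.mul_sum, ← mul_assoc,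
    prb_mul_condPmf hμ, ite_mul, zero_mul, Finset.sum_neg_distrib]
  rw [Finset.sum_comm, condEnt_eq_neg_sum_logb hμ]
  refine congrArg Neg.neg (Finset.sum_congr rfl fun ω _ => ?_)
  rw [Finset.sum_ite_eq, if_pos (Finset.mem_image_of_mem Z (mem_univ ω))]
  by_cases hω : μ ω = 0
  · simp [hω]
  have hZ : prb μ (fun ω' => Z ω' = Z ω) ≠ 0 := ne_of_gt (prb_pos hμ hω rfl)
  simp only [prb_condPmf, Prod.mk.injEq, and_assoc]
  rw [div_div_div_cancel_right₀ hZ]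

lemma condEnt_sub_condEnt_prod (hμ : ∀ ω, 0 ≤ μ ω) (X : Ω → α) (Z : Ω → γ) (W : Ω → β) :
    condEnt μ X Z - condEnt μ X (fun ω => (Z ω, W ω)) = condMutInfo μ X W Z := by
  rw [condEnt_prod hμ, condEnt, condMutInfo, ← Finset.sum_sub_distrib]
  refine Finset.sum_congr rfl fun z _ => ?_
  rw [mutInfo_eq_ent_sub_condEnt (condPmf_nonneg hμ _), mul_sub]

lemma condMutInfo_eq_of_injective {X : Ω → α} {Y : Ω → β} {Z : Ω → γ} {Z' : Ω → δ}
    {f : γ → δ} (hf : Function.Injective f) (hZ : ∀ ω, Z' ω = f (Z ω)) :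
    condMutInfo μ X Y Z' = condMutInfo μ X Y Z := by
  have hcond : ∀ z ω, Z' ω = f z ↔ Z ω = z := fun _ ω => (hZ ω).symm ▸ hf.eq_iff
  rw [condMutInfo, show Finset.univ.image Z' = (Finset.univ.image Z).image f by
    rw [Finset.image_image]; exact Finset.image_congr fun ω _ => hZ ω,
    Finset.sum_image fun z _ z' _ h => hf h]
  refine Finset.sum_congr rfl fun z _ => ?_
  rw [prb_congr (hcond z), condPmf_congr (hcond z)]

lemma condMutInfo_le_sum_of_forall {ι α' β' : Type*} [Fintype ι] [Fintype α'] [Fintype β']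
    (hμ : ∀ ω, 0 ≤ μ ω) {X : Ω → α} {Y : Ω → β} {Z : Ω → γ} {A : ι → Ω → α'} {B : ι → Ω → β'}
    (h : ∀ z, prb μ (fun ω => Z ω = z) ≠ 0 → mutInfo (condPmf μ (fun ω => Z ω = z)) X Y
      ≤ ∑ t, mutInfo (condPmf μ (fun ω => Z ω = z)) (A t) (B t)) :
    condMutInfo μ X Y Z ≤ ∑ t, condMutInfo μ (A t) (B t) Z := by
  simp only [condMutInfo]
  rw [Finset.sum_comm]
  refine Finset.sum_le_sum fun z _ => ?_
  rw [← Finset.mul_sum]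
  by_cases hz : prb μ (fun ω => Z ω = z) = 0
  · simp [hz]
  · exact mul_le_mul_of_nonneg_left (h z hz) (prb_nonneg hμ _)

end Entropy

lemma entPmf_le_neg_sum_mul_logb {α : Type*} [Fintype α] {p q : α → ℝ} (hp : IsPmf p)
    (hq : ∀ a, 0 ≤ q a) (hq1 : ∑ a, q a ≤ 1) (hpq : ∀ a, p a ≠ 0 → q a ≠ 0) :
    entPmf p ≤ -∑ a, p a * Real.logb 2 (q a) := by
  have hlog2 : 0 < Real.log 2 := Real.log_pos one_lt_two
  have key : ∀ a,
      p a * Real.logb 2 (q a) - p a * Real.logb 2 (p a) ≤ (q a - p a) / Real.log 2 := by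
    intro a
    by_cases hpa : p a = 0
    · simpa [hpa] using div_nonneg (hq a) hlog2.le
    have hpa' : 0 < p a := (hp.1 a).lt_of_ne' hpa
    have hqa : 0 < q a := (hq a).lt_of_ne' (hpq a hpa)
    rw [Real.logb, Real.logb, ← mul_sub, ← sub_div, ← Real.log_div hqa.ne' hpa'.ne',
      mul_div_assoc']
    gcongr
    calc p a * Real.log (q a / p a) ≤ p a * (q a / p a - 1) :=
          mul_le_mul_of_nonneg_left (Real.log_le_sub_one_of_pos (by positivity)) hpa'.le
      _ = q a - p a := by field_simp
  have hsum := Finset.sum_le_sum fun a (_ : a ∈ Finset.univ) => key a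
  rw [Finset.sum_sub_distrib, ← Finset.sum_div, Finset.sum_sub_distrib, hp.2] at hsum
  have : (∑ a, q a - 1) / Real.log 2 ≤ 0 :=
    div_nonpos_of_nonpos_of_nonneg (by linarith) hlog2.le
  rw [entPmf]
  linarith

section Product

variable {ι γ : Type*} [Fintype ι] [DecidableEq ι] [Fintype γ]

noncomputable def piPmf (q : ι → γ → ℝ) : (ι → γ) → ℝ :=
  fun y => ∏ t, q t (y t)

lemma isPmf_piPmf {q : ι → γ → ℝ} (hq : ∀ t, IsPmf (q t)) : IsPmf (piPmf q) :=
  ⟨fun y => Finset.prod_nonneg fun t _ => (hq t).1 _, by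
    simp only [piPmf]
    rw [← Fintype.prod_sum]
    exact Finset.prod_eq_one fun t _ => (hq t).2⟩

lemma prb_piPmf_apply_eq {q : ι → γ → ℝ} (hq : ∀ t, IsPmf (q t)) (t : ι) (c : γ) :
    prb (piPmf q) (fun y => y t = c) = q t c := by
  let q' : ι → γ → ℝ := fun s d => if s = t then (if d = c then q s d else 0) else q s d
  have hy : ∀ y : ι → γ, (if y t = c then piPmf q y else 0) = ∏ s, q' s (y s) := by
    intro y
    by_cases h : y t = c
    · rw [if_pos h]
      exact Finset.prod_congr rfl fun s _ => by by_cases hs : s = t <;> simp [q', hs, h]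
    · rw [if_neg h, Finset.prod_eq_zero (Finset.mem_univ t) (by simp [q', h])]
  have hq' : ∀ s, ∑ d, q' s d = if s = t then q t c else 1 := fun s => by
    by_cases hs : s = t <;> simp [q', hs, (hq s).2]
  simp only [prb, hy]
  rw [← Fintype.prod_sum, Finset.prod_congr rfl fun s _ => hq' s, Finset.prod_ite_eq']
  simp

lemma sum_mul_logb_prod (p : (ι → γ) → ℝ) (r : ι → γ → ℝ)
    (hr : ∀ y, p y ≠ 0 → ∀ t, r t (y t) ≠ 0) :
    ∑ y, p y * Real.logb 2 (∏ t, r t (y t)) = ∑ t, ∑ y, p y * Real.logb 2 (r t (y t)) := by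
  rw [Finset.sum_comm]
  refine Finset.sum_congr rfl fun y _ => ?_
  by_cases hy : p y = 0
  · simp [hy]
  · rw [Real.logb_prod _ _ fun t _ => hr y hy t, Finset.mul_sum]

lemma entPmf_piPmf {q : ι → γ → ℝ} (hq : ∀ t, IsPmf (q t)) :
    entPmf (piPmf q) = ∑ t, entPmf (q t) := by
  have hr : ∀ y, piPmf q y ≠ 0 → ∀ t, q t (y t) ≠ 0 := fun y hy t h =>
    hy (Finset.prod_eq_zero (Finset.mem_univ t) h)
  rw [entPmf]
  simp only [piPmf] at hr ⊢
  rw [sum_mul_logb_prod _ q hr, ← Finset.sum_neg_distrib]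
  refine Finset.sum_congr rfl fun t _ => ?_
  have := sum_prb_mul_eq_sum_mul_comp (μ := piPmf q) (fun y => y t) Finset.univ
    (fun _ => Finset.mem_univ _) fun c => Real.logb 2 (q t c)
  simp only [prb_piPmf_apply_eq hq] at this
  rw [entPmf, this]
  rfl

lemma ent_le_sum_ent_apply {Ω : Type*} [Fintype Ω] {μ : Ω → ℝ} (hμ : IsPmf μ)
    (W : Ω → ι → γ) : ent μ W ≤ ∑ t, ent μ (fun ω => W ω t) := by
  let r : ι → γ → ℝ := fun t => law μ (fun ω => W ω t)
  have hr : ∀ y, law μ W y ≠ 0 → ∀ t, r t (y t) ≠ 0 := fun y hy t =>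
    ((prb_nonneg hμ.1 _).lt_of_ne' hy |>.trans_le (prb_mono hμ.1 fun ω h => congrFun h t)).ne'
  calc ent μ W ≤ -∑ y, law μ W y * Real.logb 2 (piPmf r y) :=
        entPmf_le_neg_sum_mul_logb (isPmf_law hμ W) (isPmf_piPmf fun t => isPmf_law hμ _).1
          (isPmf_piPmf fun t => isPmf_law hμ _).2.le fun y hy =>
            Finset.prod_ne_zero_iff.2 fun t _ => hr y hy t
    _ = ∑ t, ent μ (fun ω => W ω t) := by
      simp only [piPmf]
      rw [sum_mul_logb_prod _ r hr, ← Finset.sum_neg_distrib]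
      refine Finset.sum_congr rfl fun t _ => ?_
      rw [ent_eq_neg_sum_logb]
      exact congrArg Neg.neg (sum_prb_mul_eq_sum_mul_comp W Finset.univ
        (fun _ => Finset.mem_univ _) fun y => Real.logb 2 (r t (y t)))

end Product

section Fano

variable {Ω β γ : Type*} [Fintype Ω] [Fintype β] {μ : Ω → ℝ}

lemma entPmf_le_sum_mul_of_neg_logb_le {p q c : β → ℝ} (hp : IsPmf p) (hq : ∀ b, 0 ≤ q b)
    (hq1 : ∑ b, q b ≤ 1) (hc : ∀ b, p b ≠ 0 → 0 < q b ∧ -Real.logb 2 (q b) ≤ c b) :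
    entPmf p ≤ ∑ b, p b * c b := by
  refine (entPmf_le_neg_sum_mul_logb hp hq hq1 fun b hb => (hc b hb).1.ne').trans ?_
  rw [← Finset.sum_neg_distrib]
  refine Finset.sum_le_sum fun b _ => ?_
  by_cases hb : p b = 0
  · simp [hb]
  · rw [← mul_neg]
    exact mul_le_mul_of_nonneg_left (hc b hb).2 (hp.1 b)

lemma entPmf_uniform [DecidableEq β] (s : Finset β) :
    entPmf (fun b => if b ∈ s then 1 / (s.card : ℝ) else 0) = Real.logb 2 s.card := by
  have : ∀ b, (if b ∈ s then 1 / (s.card : ℝ) else 0)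
      * Real.logb 2 (if b ∈ s then 1 / (s.card : ℝ) else 0)
      = if b ∈ s then -(1 / (s.card : ℝ) * Real.logb 2 s.card) else 0 := fun b => by
    split_ifs <;> simp [Real.logb_inv]
  rw [entPmf, Finset.sum_congr rfl fun b _ => this b, Finset.sum_ite_mem, Finset.univ_inter,
    Finset.sum_const, nsmul_eq_mul, mul_neg, neg_neg, ← mul_assoc, mul_one_div]
  rcases (Nat.cast_nonneg (α := ℝ) s.card).eq_or_lt with h | h
  · simp [← h]
  · rw [div_self h.ne', one_mul]

lemma entPmf_le_one_add_mul_logb {p : β → ℝ} (hp : IsPmf p) {s : Finset β}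
    (hs : ∀ b, p b ≠ 0 → b ∈ s) {M : ℕ} (hM : s.card ≤ M) (b₀ : β) :
    entPmf p ≤ 1 + (1 - p b₀) * Real.logb 2 M := by
  obtain ⟨b₁, hb₁⟩ : ∃ b, p b ≠ 0 := by
    by_contra! h
    simpa [h] using hp.2
  have hM0 : (0 : ℝ) < M := by
    exact_mod_cast (Finset.card_pos.2 ⟨b₁, hs b₁ hb₁⟩).trans_le hM
  -- Gibbs against `q`, which puts mass `1/2` on the guess `b₀` and spreads `1/2` over `s`.
  let q : β → ℝ := fun b =>
    (if b = b₀ then 1 / 2 else 0) + (if b ∈ s then 1 / (2 * (M : ℝ)) else 0)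
  have hq0 : ∀ b, 0 ≤ q b := fun b => by simp only [q]; split_ifs <;> positivity
  have hq1 : ∑ b, q b ≤ 1 := by
    simp only [q, Finset.sum_add_distrib, Finset.sum_ite_eq', Finset.mem_univ, if_true,
      Finset.sum_ite_mem, Finset.univ_inter, Finset.sum_const, nsmul_eq_mul]
    have : (s.card : ℝ) * (1 / (2 * M)) ≤ 1 / 2 := by
      rw [mul_one_div, div_le_iff₀ (by positivity)]
      linarith [show (s.card : ℝ) ≤ M by exact_mod_cast hM]
    linarith
  have hq_s : ∀ b ∈ s, 1 / (2 * (M : ℝ)) ≤ q b := fun b hb => by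
    simp only [q, if_pos hb]
    split_ifs <;> linarith
  have hc : ∀ b, p b ≠ 0 → 0 < q b ∧
      -Real.logb 2 (q b) ≤ 1 + Real.logb 2 M - if b = b₀ then Real.logb 2 M else 0 := by
    intro b hb
    refine ⟨(by positivity : (0 : ℝ) < 1 / (2 * M)).trans_le (hq_s b (hs b hb)), ?_⟩
    split_ifs with h
    · have : 1 / 2 ≤ q b := by
        simp only [q, if_pos h]
        split_ifs <;> linarith [show (0 : ℝ) < 1 / (2 * M) by positivity]
      have := Real.logb_le_logb_of_le one_lt_two (by norm_num) this
      rw [one_div, Real.logb_inv, Real.logb_self_eq_one one_lt_two] at this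
      linarith
    · have := Real.logb_le_logb_of_le one_lt_two (by positivity) (hq_s b (hs b hb))
      rw [one_div, Real.logb_inv, Real.logb_mul two_ne_zero hM0.ne',
        Real.logb_self_eq_one one_lt_two] at this
      linarith
  calc entPmf p ≤ ∑ b, p b * (1 + Real.logb 2 M - if b = b₀ then Real.logb 2 M else 0) :=
        entPmf_le_sum_mul_of_neg_logb_le hp hq0 hq1 hc
    _ = 1 + (1 - p b₀) * Real.logb 2 M := by
        simp only [mul_sub, Finset.sum_sub_distrib, ← Finset.sum_mul, hp.2, mul_ite, mul_zero,
          Finset.sum_ite_eq', Finset.mem_univ, if_true]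
        ring

lemma condEnt_le_one_add_prb_ne_mul_logb (hμ : IsPmf μ) (V : Ω → β) (Z : Ω → γ)
    (S : γ → Finset β) (hS : ∀ ω, μ ω ≠ 0 → V ω ∈ S (Z ω)) {M : ℕ} (hM : ∀ z, (S z).card ≤ M)
    (g : γ → β) : condEnt μ V Z ≤ 1 + prb μ (fun ω => g (Z ω) ≠ V ω) * Real.logb 2 M := by
  have hz_bound : ∀ z, prb μ (fun ω => Z ω = z) * ent (condPmf μ (fun ω => Z ω = z)) V
      ≤ prb μ (fun ω => Z ω = z ∧ True)
        + prb μ (fun ω => Z ω = z ∧ g (Z ω) ≠ V ω) * Real.logb 2 M := by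
    intro z
    by_cases hz : prb μ (fun ω => Z ω = z) = 0
    · simp [hz, prb_and_eq_zero hμ.1 hz]
    have hcond := isPmf_condPmf hμ hz
    have hsupp : ∀ b, law (condPmf μ (fun ω => Z ω = z)) V b ≠ 0 → b ∈ S z := fun b hb => by
      obtain ⟨ω, rfl, hω⟩ := exists_of_prb_ne_zero hb
      obtain ⟨rfl, hμω⟩ := of_condPmf_ne_zero hω
      exact hS ω hμω
    have herr : prb μ (fun ω => Z ω = z) * (1 - law (condPmf μ (fun ω => Z ω = z)) V (g z))
        = prb μ (fun ω => Z ω = z ∧ g (Z ω) ≠ V ω) := by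
      rw [law, ← prb_not hcond, prb_mul_prb_condPmf hμ.1]
      exact prb_congr fun ω => and_congr_right fun h => by rw [h, ne_comm]
    calc prb μ (fun ω => Z ω = z) * ent (condPmf μ (fun ω => Z ω = z)) V
        ≤ prb μ (fun ω => Z ω = z)
          * (1 + (1 - law (condPmf μ (fun ω => Z ω = z)) V (g z)) * Real.logb 2 M) :=
          mul_le_mul_of_nonneg_left
            (entPmf_le_one_add_mul_logb (isPmf_law hcond V) hsupp (hM z) (g z))
            (prb_nonneg hμ.1 _)
      _ = _ := by
          rw [mul_add, mul_one, ← mul_assoc, herr, prb_congr fun ω => (and_true _).symm.to_iff]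
  calc condEnt μ V Z ≤ ∑ z ∈ Finset.univ.image Z, (prb μ (fun ω => Z ω = z ∧ True)
        + prb μ (fun ω => Z ω = z ∧ g (Z ω) ≠ V ω) * Real.logb 2 M) :=
        Finset.sum_le_sum fun z _ => hz_bound z
    _ = 1 + prb μ (fun ω => g (Z ω) ≠ V ω) * Real.logb 2 M := by
      have hZ : ∀ ω, Z ω ∈ Finset.univ.image Z := fun ω =>
        Finset.mem_image_of_mem Z (mem_univ ω)
      rw [Finset.sum_add_distrib, ← Finset.sum_mul, sum_prb_and Z _ hZ, sum_prb_and Z _ hZ,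
        prb_true hμ]

end Fano

section ConditionalLaw

variable {Ω α β γ δ ι : Type*} [Fintype Ω] {μ : Ω → ℝ}

/-- `X` has conditional law `q z` given `Z = z`; stated jointly, so null events impose nothing. -/
def HasCondLaw (μ : Ω → ℝ) (X : Ω → α) (Z : Ω → γ) (q : γ → α → ℝ) : Prop :=
  ∀ z a, prb μ (fun ω => Z ω = z ∧ X ω = a) = prb μ (fun ω => Z ω = z) * q z a

namespace HasCondLaw

lemma ent_condPmf [Fintype α] {X : Ω → α} {Z : Ω → γ} {q : γ → α → ℝ}
    (h : HasCondLaw μ X Z q) {z : γ} (hz : prb μ (fun ω => Z ω = z) ≠ 0) :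
    ent (condPmf μ (fun ω => Z ω = z)) X = entPmf (q z) :=
  congrArg entPmf <| funext fun a => by rw [prb_condPmf, h, mul_div_cancel_left₀ _ hz]

lemma condEnt_eq [Fintype α] {X : Ω → α} {Z : Ω → γ} {q : γ → α → ℝ}
    (h : HasCondLaw μ X Z q) : condEnt μ X Z = ∑ ω, μ ω * entPmf (q (Z ω)) :=
  condEnt_eq_sum_of_ent_condPmf X Z _ fun _ hz => h.ent_condPmf hz

lemma congr_ae {X : Ω → α} {Z : Ω → γ} {q q' : γ → α → ℝ} (h : HasCondLaw μ X Z q)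
    (hq : ∀ z, prb μ (fun ω => Z ω = z) ≠ 0 → q z = q' z) : HasCondLaw μ X Z q' := by
  intro z a
  by_cases hz : prb μ (fun ω => Z ω = z) = 0
  · rw [h, hz, zero_mul, zero_mul]
  · rw [h, hq z hz]

lemma condPmf_of_prod {X : Ω → α} {Z : Ω → γ} {V : Ω → β} {q : γ × β → α → ℝ}
    (h : HasCondLaw μ X (fun ω => (Z ω, V ω)) q) (z : γ) :
    HasCondLaw (condPmf μ (fun ω => Z ω = z)) X V fun v => q (z, v) := by
  intro v a
  have hpair : ∀ (F : Ω → Prop), prb μ (fun ω => (Z ω, V ω) = (z, v) ∧ F ω)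
      = prb μ (fun ω => Z ω = z ∧ V ω = v ∧ F ω) :=
    fun F => prb_congr fun ω => by rw [Prod.mk.injEq, and_assoc]
  have hV := hpair fun _ => True
  simp only [and_true] at hV
  rw [prb_condPmf, prb_condPmf, ← hpair, h, hV, div_mul_eq_mul_div]

lemma of_ae_eq_comp {X : Ω → α} {V : Ω → β} {D : Ω → δ} {f : β → δ} {q : δ → α → ℝ}
    (h : HasCondLaw μ X V fun v => q (f v)) (hD : ∀ ω, μ ω ≠ 0 → D ω = f (V ω)) :
    HasCondLaw μ X D q := by
  intro d a
  have hV : ∀ ω, V ω ∈ Finset.univ.image V := fun ω => Finset.mem_image_of_mem V (mem_univ ω)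
  have hsplit : ∀ (F : Ω → Prop) v, prb μ (fun ω => V ω = v ∧ D ω = d ∧ F ω)
      = if f v = d then prb μ (fun ω => V ω = v ∧ F ω) else 0 := fun F v => by
    split_ifs with hv
    · exact prb_congr_ae fun ω hω => by rw [hD ω hω]; grind
    · exact prb_eq_zero_of_forall fun ω hω => by_contra fun hμω => hv (by grind)
  rw [prb_congr (E := fun ω => D ω = d) fun ω => (and_true _).symm.to_iff,
    ← sum_prb_and V _ hV, ← sum_prb_and V _ hV, Finset.sum_mul]
  refine Finset.sum_congr rfl fun v _ => ?_
  rw [hsplit (fun ω => X ω = a), hsplit (fun _ => True)]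
  split_ifs with hv
  · rw [h, prb_congr fun ω => (and_true _).to_iff, ← hv]
  · rw [zero_mul]

lemma apply_of_piPmf [Fintype γ] [Fintype ι] [DecidableEq ι] {W : Ω → ι → γ} {V : Ω → β}
    {r : β → ι → γ → ℝ} (h : HasCondLaw μ W V fun v => piPmf (r v))
    (hr : ∀ v t, IsPmf (r v t)) (t : ι) :
    HasCondLaw μ (fun ω => W ω t) V fun v => r v t := by
  intro v c
  dsimp only
  rw [← sum_prb_and W Finset.univ (fun _ => Finset.mem_univ _),
    ← prb_piPmf_apply_eq (hr v) t c, show prb (piPmf (r v)) (fun y => y t = c)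
      = ∑ y, if y t = c then piPmf (r v) y else 0 from rfl, Finset.mul_sum]
  refine Finset.sum_congr rfl fun y _ => ?_
  split_ifs with hy
  · rw [← h, prb_congr fun ω => ?_]
    grind
  · rw [mul_zero]
    exact prb_eq_zero_of_forall fun ω (hω : W ω = y ∧ V ω = v ∧ W ω t = c) =>
      absurd (hω.1 ▸ hω.2.2) hy

end HasCondLaw

end ConditionalLaw

section Channel

variable {Ω β γ δ ι : Type*} [Fintype Ω] [Fintype β] [Fintype γ] [Fintype δ] [Fintype ι]
  [DecidableEq ι] {μ : Ω → ℝ}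

theorem mutInfo_le_sum_mutInfo_of_memoryless (hμ : IsPmf μ) (V : Ω → β) (W : Ω → ι → γ)
    (D : ι → Ω → δ) (f : ι → β → δ) (r : ι → δ → γ → ℝ) (hr : ∀ t d, IsPmf (r t d))
    (hW : HasCondLaw μ W V fun v => piPmf fun t => r t (f t v))
    (hD : ∀ t ω, μ ω ≠ 0 → D t ω = f t (V ω)) :
    mutInfo μ V W ≤ ∑ t, mutInfo μ (D t) (fun ω => W ω t) := by
  have hWt : ∀ t, HasCondLaw μ (fun ω => W ω t) (D t) (r t) := fun t =>
    (hW.apply_of_piPmf (r := fun v t => r t (f t v)) (fun _ _ => hr _ _) t).of_ae_eq_comp (hD t)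
  have hcond : condEnt μ W V = ∑ t, condEnt μ (fun ω => W ω t) (D t) := by
    simp_rw [hW.condEnt_eq, (hWt _).condEnt_eq, entPmf_piPmf fun t => hr t _, Finset.mul_sum]
    rw [Finset.sum_comm]
    refine Finset.sum_congr rfl fun t _ => Finset.sum_congr rfl fun ω _ => ?_
    by_cases hω : μ ω = 0
    · simp [hω]
    · rw [hD t ω hω]
  rw [mutInfo_comm, mutInfo_eq_ent_sub_condEnt hμ.1, hcond]
  simp_rw [mutInfo_comm _ (D _), mutInfo_eq_ent_sub_condEnt hμ.1]
  rw [Finset.sum_sub_distrib]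
  linarith [ent_le_sum_ent_apply hμ W]

end Channel

lemma card_filter_eq_card_filter_sdiff_add {α : Type*} [DecidableEq α] {s t : Finset α}
    (h : s ⊆ t) (p : α → Prop) [DecidablePred p] :
    (t.filter p).card = ((t \ s).filter p).card + (s.filter p).card := by
  rw [← Finset.card_union_of_disjoint (Finset.disjoint_filter_filter Finset.sdiff_disjoint),
    ← Finset.filter_union, Finset.sdiff_union_of_subset h]

lemma XS_left_injective {N : ℕ} (v : Fin N → Bool) : Function.Injective fun S => XS S v :=
  fun _ _ h => congrArg Prod.fst h

section GenieModel

variable {N K l T : ℕ} {Y : Type*} [Fintype Y] {ν : ℕ → Y → ℝ} {X : Fin N → Fin T → Bool}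

noncomputable def kSupersets (K : ℕ) (u : Finset (Fin N)) : Finset (KSets N K) :=
  Finset.univ.filter fun v => u ⊆ v.val

lemma card_kSupersets (hlK : l ≤ K) (u : KSets N l) :
    (kSupersets K u.val).card = (N - l).choose (K - l) := by
  rw [kSupersets, ← Finset.card_map (Function.Embedding.subtype _)]
  have := Finset.card_filter_powersetCard_subset u.val Finset.univ K (Finset.subset_univ _)
    (u.2.symm ▸ hlK)
  rw [Finset.card_univ, Fintype.card_fin, u.2] at this
  rw [← this]
  congr 1
  ext s
  simp [and_comm]

/-- `P(𝓛 = u, 𝒦 = v)`. -/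
noncomputable def genieWeight (N K l : ℕ) (u : KSets N l) (v : KSets N K) : ℝ :=
  if u.val ⊆ v.val then (1 / (N.choose l : ℝ)) * (1 / ((N - l).choose (K - l) : ℝ)) else 0

/-- The law of `(Y_1, …, Y_T)` given `𝒦 = S`. -/
noncomputable def outcomePmf (ν : ℕ → Y → ℝ) (X : Fin N → Fin T → Bool)
    (S : Finset (Fin N)) : (Fin T → Y) → ℝ :=
  piPmf fun t => ν (S.filter fun i => X i t = true).card

lemma naGeniePmf_apply (ω : KSets N l × KSets N K × (Fin T → Y)) :
    naGeniePmf N K l T Y ν X ω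
      = genieWeight N K l ω.1 ω.2.1 * outcomePmf ν X ω.2.1.val ω.2.2 :=
  rfl

lemma isPmf_outcomePmf (hν : ∀ k, IsPmf (ν k)) (S : Finset (Fin N)) :
    IsPmf (outcomePmf ν X S) :=
  isPmf_piPmf fun _ => hν _

lemma sum_genieWeight (hKN : K ≤ N) (hlK : l ≤ K) (u : KSets N l) :
    ∑ v, genieWeight N K l u v = 1 / (N.choose l : ℝ) := by
  have hM : ((N - l).choose (K - l) : ℝ) ≠ 0 :=
    Nat.cast_ne_zero.2 (Nat.choose_pos (by omega)).ne'
  simp only [genieWeight]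
  rw [← Finset.sum_filter, Finset.sum_const, nsmul_eq_mul,
    show (Finset.univ.filter _).card = _ from card_kSupersets hlK u]
  field_simp

lemma isPmf_naGeniePmf (hν : ∀ k, IsPmf (ν k)) (hKN : K ≤ N) (hlK : l ≤ K) :
    IsPmf (naGeniePmf N K l T Y ν X) := by
  have hC : (N.choose l : ℝ) ≠ 0 := Nat.cast_ne_zero.2 (Nat.choose_pos (by omega)).ne'
  refine ⟨fun ω => mul_nonneg ?_ ((isPmf_outcomePmf hν _).1 _), ?_⟩
  · split_ifs <;> positivity
  · simp only [Fintype.sum_prod_type, naGeniePmf_apply, ← Finset.mul_sum,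
      (isPmf_outcomePmf hν _).2, mul_one, sum_genieWeight hKN hlK, Finset.sum_const,
      Finset.card_univ, Fintype.card_finset_len, Fintype.card_fin, nsmul_eq_mul]
    field_simp

lemma subset_of_naGeniePmf_ne_zero {ω : KSets N l × KSets N K × (Fin T → Y)}
    (h : naGeniePmf N K l T Y ν X ω ≠ 0) : ω.1.val ⊆ ω.2.1.val := by
  by_contra hc
  exact h (by simp [naGeniePmf_apply, genieWeight, hc])

lemma prb_naGeniePmf_pair_and (p : KSets N l × KSets N K) (P : (Fin T → Y) → Prop) :
    prb (naGeniePmf N K l T Y ν X) (fun ω => (ω.1, ω.2.1) = p ∧ P ω.2.2)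
      = genieWeight N K l p.1 p.2 * prb (outcomePmf ν X p.2.val) P := by
  rw [prb, ← (Equiv.prodAssoc _ _ _).sum_comp, Fintype.sum_prod_type, Finset.sum_eq_single p]
  · rw [prb, Finset.mul_sum]
    refine Finset.sum_congr rfl fun y _ => ?_
    by_cases hy : P y <;> simp [hy, naGeniePmf_apply]
  · intro p' _ hp'
    exact Finset.sum_eq_zero fun y _ => if_neg fun h => hp' h.1
  · simp

lemma hasCondLaw_outcomes_naGeniePmf (hν : ∀ k, IsPmf (ν k)) :
    HasCondLaw (naGeniePmf N K l T Y ν X) (fun ω => ω.2.2) (fun ω => (ω.1, ω.2.1))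
      fun p => outcomePmf ν X p.2.val := by
  intro p y
  dsimp only
  rw [prb_naGeniePmf_pair_and p (· = y),
    prb_congr (E := fun ω : KSets N l × KSets N K × (Fin T → Y) => (ω.1, ω.2.1) = p)
      fun ω => (and_true _).symm.to_iff,
    prb_naGeniePmf_pair_and p fun _ => True, prb_true (isPmf_outcomePmf hν _), mul_one,
    prb_eq_self]

lemma prb_naGeniePmf_eq_genieWeight (hν : ∀ k, IsPmf (ν k)) (u : KSets N l)
    (v : KSets N K) :
    prb (naGeniePmf N K l T Y ν X) (fun ω => ω.1 = u ∧ ω.2.1 = v) = genieWeight N K l u v := by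
  have := prb_naGeniePmf_pair_and (ν := ν) (X := X) (u, v) fun _ => True
  rwa [prb_true (isPmf_outcomePmf hν _), mul_one, prb_congr fun ω => by
    rw [Prod.mk.injEq, and_true]] at this

lemma condEnt_defectives_genie (hν : ∀ k, IsPmf (ν k)) (hKN : K ≤ N) (hlK : l ≤ K) :
    condEnt (naGeniePmf N K l T Y ν X) (fun ω => ω.2.1) (fun ω => ω.1)
      = Real.logb 2 ((N - l).choose (K - l) : ℝ) := by
  have hμ := isPmf_naGeniePmf (T := T) (ν := ν) (X := X) hν hKN hlK
  have hlaw : HasCondLaw (naGeniePmf N K l T Y ν X) (fun ω => ω.2.1) (fun ω => ω.1)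
      fun u v => if v ∈ kSupersets K u.val then 1 / ((kSupersets K u.val).card : ℝ)
        else 0 := by
    intro u v
    rw [prb_naGeniePmf_eq_genieWeight hν, ← sum_prb_and (fun ω => ω.2.1) Finset.univ
      (fun _ => Finset.mem_univ _), Finset.sum_congr rfl fun v' _ =>
        (prb_congr fun ω => and_comm).trans (prb_naGeniePmf_eq_genieWeight hν u v'),
      sum_genieWeight hKN hlK]
    simp only [card_kSupersets hlK u]
    simp [genieWeight, kSupersets]
  rw [hlaw.condEnt_eq]
  simp_rw [entPmf_uniform, card_kSupersets hlK, ← Finset.sum_mul, hμ.2, one_mul]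

lemma condEnt_defectives_le_fano (hν : ∀ k, IsPmf (ν k)) (hKN : K ≤ N) (hlK : l ≤ K)
    (Khat : (Fin T → Y) → KSets N K) :
    condEnt (naGeniePmf N K l T Y ν X) (fun ω => ω.2.1) (fun ω => (ω.1, ω.2.2))
      ≤ 1 + prb (naGeniePmf N K l T Y ν X) (fun ω => Khat ω.2.2 ≠ ω.2.1)
        * Real.logb 2 ((N - l).choose (K - l) : ℝ) :=
  condEnt_le_one_add_prb_ne_mul_logb (isPmf_naGeniePmf hν hKN hlK) (fun ω => ω.2.1)
    (fun ω => (ω.1, ω.2.2)) (fun z => kSupersets K z.1.val)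
    (fun _ hω => Finset.mem_filter.2 ⟨Finset.mem_univ _, subset_of_naGeniePmf_ne_zero hω⟩)
    (fun z => (card_kSupersets hlK z.1).le) fun z => Khat z.2

lemma mutInfo_condPmf_genie_le_sum (hν : ∀ k, IsPmf (ν k)) (hKN : K ≤ N) (hlK : l ≤ K)
    (u : KSets N l) (hu : prb (naGeniePmf N K l T Y ν X) (fun ω => ω.1 = u) ≠ 0) :
    mutInfo (condPmf (naGeniePmf N K l T Y ν X) (fun ω => ω.1 = u)) (fun ω => ω.2.1)
        (fun ω => ω.2.2)
      ≤ ∑ t, mutInfo (condPmf (naGeniePmf N K l T Y ν X) (fun ω => ω.1 = u))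
          (fun ω => XS (ω.2.1.val \ ω.1.val) (fun i => X i t)) (fun ω => ω.2.2 t) := by
  have hsupp : ∀ ω, condPmf (naGeniePmf N K l T Y ν X) (fun ω => ω.1 = u) ω ≠ 0 →
      ω.1 = u ∧ u.val ⊆ ω.2.1.val := fun ω h => by
    obtain ⟨h1, h2⟩ := of_condPmf_ne_zero h
    exact ⟨h1, h1 ▸ subset_of_naGeniePmf_ne_zero h2⟩
  refine mutInfo_le_sum_mutInfo_of_memoryless
    (isPmf_condPmf (isPmf_naGeniePmf hν hKN hlK) hu) _ _ _
    (fun t v => XS (v.val \ u.val) (fun i => X i t))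
    (fun t a => ν ((a.1.filter fun i => X i t = true).card
      + (u.val.filter fun i => X i t = true).card)) (fun _ _ => hν _) ?_
    fun t ω hω => by rw [(hsupp ω hω).1]
  refine ((hasCondLaw_outcomes_naGeniePmf hν).condPmf_of_prod u).congr_ae fun v hv => ?_
  obtain ⟨ω, rfl, hω⟩ := exists_of_prb_ne_zero hv
  simp only [outcomePmf, XS]
  simp_rw [card_filter_eq_card_filter_sdiff_add (hsupp ω hω).2]

lemma condMutInfo_defectives_outcomes_le_sum (hν : ∀ k, IsPmf (ν k)) (hKN : K ≤ N)
    (hlK : l ≤ K) :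
    condMutInfo (naGeniePmf N K l T Y ν X) (fun ω => ω.2.1) (fun ω => ω.2.2) (fun ω => ω.1)
      ≤ ∑ t, condMutInfo (naGeniePmf N K l T Y ν X)
          (fun ω => XS (ω.2.1.val \ ω.1.val) (fun i => X i t)) (fun ω => ω.2.2 t)
          (fun ω => XS ω.1.val (fun i => X i t)) := by
  have hrow : ∀ t, Function.Injective fun u : KSets N l => XS u.val fun i => X i t :=
    fun t => (XS_left_injective _).comp Subtype.val_injective
  rw [Finset.sum_congr rfl fun t _ => condMutInfo_eq_of_injective (hrow t) fun _ => rfl]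
  exact condMutInfo_le_sum_of_forall (isPmf_naGeniePmf hν hKN hlK).1
    (A := fun t ω => XS (ω.2.1.val \ ω.1.val) (fun i => X i t)) (B := fun t ω => ω.2.2 t)
    (mutInfo_condPmf_genie_le_sum hν hKN hlK)

end GenieModel

/-- In nonadaptive group testing (model where only defects matter) with a
fixed testing matrix `X`, the genie construction of `𝓛` and `𝒦`, an estimator `K̂`, and error
probability `ε = P(K̂ ≠ 𝒦)`,
`(1 − ε) · log₂ C(N−ℓ, K−ℓ) ≤ 1 + Σ_{t=1}^T I( X_{𝒦∖𝓛,t} : Y_t ∣ X_{𝓛,t} )`. -/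
theorem fano_bound_nonadaptive_genie
    (N K l T : ℕ) (hlK : l < K) (hKN : K ≤ N) (Y : Type*) [Fintype Y]
    (ν : ℕ → Y → ℝ) (hν : ∀ k, IsPmf (ν k))
    (X : Fin N → Fin T → Bool)
    (Khat : (Fin T → Y) → KSets N K)
    (eps : ℝ)
    (heps : eps = prb (naGeniePmf N K l T Y ν X) (fun ω => Khat ω.2.2 ≠ ω.2.1)) :
    (1 - eps) * Real.logb 2 (((N - l).choose (K - l) : ℝ))
      ≤ 1 + ∑ t : Fin T,
          condMutInfo (naGeniePmf N K l T Y ν X)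
            (fun ω => XS (ω.2.1.val \ ω.1.val) (fun i => X i t))
            (fun ω => ω.2.2 t)
            (fun ω => XS ω.1.val (fun i => X i t)) := by
  have hμ := isPmf_naGeniePmf (T := T) (ν := ν) (X := X) hν hKN hlK.le
  have hH := condEnt_defectives_genie (T := T) (X := X) hν hKN hlK.le
  have hfano := condEnt_defectives_le_fano (X := X) hν hKN hlK.le Khat
  have hinfo := condMutInfo_defectives_outcomes_le_sum (X := X) hν hKN hlK.le
  rw [← condEnt_sub_condEnt_prod hμ.1] at hinfo
  rw [heps]
  linarith
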